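/- Let d ≥ 1, R ≥ 1, and let ψ : [1,∞) → (0,∞) be decreasing. Let B ⊆ ℝ^d be an affine subspace and γ > 0 a constant such that dist_∞(x,𝔅) > γ·ψ(|x|_∞) for every nonzero x ∈ ℤ^{d+1}. For a real T ≥ 1 define Ω_T = {z ∈ ℝ^{d+1} : 0 ≤ z_0 ≤ T, max_{1≤j≤d}|z_j| ≤ RT, dist_∞(z,𝔅) ≤ γ·ψ(RT)}. Then for every c ∈ ℝ^{d+1}, the translated dilate (1/2)·Ω_T + c = {z/2 + c : z ∈ Ω_T} contains at most one integer point. -/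

import Mathlib

/-!
If two integer points `x ≠ y` lie in `½ Ω_T + c`, say `x = ½ z₁ + c` and `y = ½ z₂ + c`, then
`x - y = ½ (z₁ - z₂)` is a nonzero integer vector. Its sup norm lies in `[1, RT]`, and since
`dist_∞(·, 𝔅)` is a seminorm (the quotient norm modulo `𝔅`) it lies within `γ ψ(RT)` of `𝔅`.
As `ψ` is decreasing, `γ ψ(|x - y|_∞) ≥ γ ψ(RT)`, contradicting the badness of `B`.
-/

/-- The lift `w ↦ (1, w)` from `ℝ^d` to `ℝ^{d+1}`. -/
noncomputable def lift1 {d : ℕ} (w : Fin d → ℝ) : Fin (d+1) → ℝ := Fin.cons 1 w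

/-- The linear span `𝔅 ⊆ ℝ^{d+1}` of `{(1,w) : w ∈ B}` for an affine subspace `B ⊆ ℝ^d`. -/
noncomputable def spanLift {d : ℕ} (B : AffineSubspace ℝ (Fin d → ℝ)) :
    Submodule ℝ (Fin (d+1) → ℝ) :=
  Submodule.span ℝ (lift1 '' (B : Set (Fin d → ℝ)))

/-- The set `Ω_T`. -/
noncomputable def OmegaSet {d : ℕ} (B : AffineSubspace ℝ (Fin d → ℝ))
    (ψ : ℝ → ℝ) (R T γ : ℝ) : Set (Fin (d+1) → ℝ) :=
  {z | 0 ≤ z 0 ∧ z 0 ≤ T ∧ (∀ j : Fin d, |z j.succ| ≤ R * T) ∧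
    Metric.infDist z (spanLift B : Set (Fin (d+1) → ℝ)) ≤ γ * ψ (R * T)}

theorem Submodule.infDist_smul_sub_le {E : Type*} [SeminormedAddCommGroup E] [NormedSpace ℝ E]
    (S : Submodule ℝ E) (r : ℝ) (a b : E) :
    Metric.infDist (r • (a - b)) S ≤ ‖r‖ * (Metric.infDist a S + Metric.infDist b S) := by
  have hq : ∀ v : E, Metric.infDist v S = ‖S.mkQ v‖ := fun v =>
    (QuotientAddGroup.norm_mk (S := S.toAddSubgroup) v).symm
  simp only [hq, map_smul, map_sub, norm_smul]
  exact mul_le_mul_of_nonneg_left (norm_sub_le _ _) (norm_nonneg r)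

theorem one_le_norm_intCast_of_ne_zero {ι : Type*} [Fintype ι] {x : ι → ℤ} (hx : x ≠ 0) :
    1 ≤ ‖fun i => (x i : ℝ)‖ := by
  obtain ⟨i, hi⟩ := Function.ne_iff.mp hx
  calc (1 : ℝ) ≤ |(x i : ℝ)| := by exact_mod_cast Int.one_le_abs hi
    _ ≤ _ := norm_le_pi_norm (fun i => (x i : ℝ)) i

section OmegaSet

variable {d : ℕ} {B : AffineSubspace ℝ (Fin d → ℝ)} {ψ : ℝ → ℝ} {R T γ : ℝ}
  {z₁ z₂ : Fin (d+1) → ℝ}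

theorem norm_half_sub_le_of_mem_OmegaSet (hR : 1 ≤ 2 * R)
    (h₁ : z₁ ∈ OmegaSet B ψ R T γ) (h₂ : z₂ ∈ OmegaSet B ψ R T γ) :
    ‖(1/2 : ℝ) • (z₁ - z₂)‖ ≤ R * T := by
  obtain ⟨h₁0, h₁T, h₁j, -⟩ := h₁
  obtain ⟨h₂0, h₂T, h₂j, -⟩ := h₂
  have hRT : T ≤ 2 * (R * T) := by nlinarith
  refine (pi_norm_le_iff_of_nonneg (by linarith)).mpr fun i => ?_
  simp only [Pi.smul_apply, Pi.sub_apply, smul_eq_mul, norm_mul, Real.norm_eq_abs,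
    abs_of_pos (one_half_pos (α := ℝ))]
  induction i using Fin.cases with
  | zero => linarith [abs_sub_le_of_nonneg_of_le h₁0 h₁T h₂0 h₂T]
  | succ j => linarith [abs_sub (z₁ j.succ) (z₂ j.succ), h₁j j, h₂j j]

theorem infDist_half_sub_le_of_mem_OmegaSet
    (h₁ : z₁ ∈ OmegaSet B ψ R T γ) (h₂ : z₂ ∈ OmegaSet B ψ R T γ) :
    Metric.infDist ((1/2 : ℝ) • (z₁ - z₂)) (spanLift B : Set (Fin (d+1) → ℝ)) ≤
      γ * ψ (R * T) := by
  have h := (spanLift B).infDist_smul_sub_le (1/2) z₁ z₂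
  rw [Real.norm_of_nonneg one_half_pos.le] at h
  linarith [h₁.2.2.2, h₂.2.2.2]

end OmegaSet

theorem half_omega_translate_at_most_one_integer_point_general
    (d : ℕ) (R : ℝ) (hR : 1 ≤ R)
    (ψ : ℝ → ℝ)
    (hψanti : ∀ T₁ T₂, 1 ≤ T₁ → T₁ ≤ T₂ → ψ T₂ ≤ ψ T₁)
    (B : AffineSubspace ℝ (Fin d → ℝ)) (γ : ℝ) (hγ : 0 < γ)
    (hBbad : ∀ x : Fin (d+1) → ℤ, x ≠ 0 →
      γ * ψ ‖(fun i => (x i : ℝ))‖ <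
        Metric.infDist (fun i => (x i : ℝ)) (spanLift B : Set (Fin (d+1) → ℝ)))
    (T : ℝ) (c : Fin (d+1) → ℝ) :
    ∀ x y : Fin (d+1) → ℤ,
      (∃ z ∈ OmegaSet B ψ R T γ, (fun i => (x i : ℝ)) = (1/2 : ℝ) • z + c) →
      (∃ z ∈ OmegaSet B ψ R T γ, (fun i => (y i : ℝ)) = (1/2 : ℝ) • z + c) →
      x = y := by
  rintro x y ⟨z₁, hz₁, hx⟩ ⟨z₂, hz₂, hy⟩
  by_contra hxy
  have hne : x - y ≠ 0 := sub_ne_zero.mpr hxy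
  have hdiff : (fun i => ((x - y) i : ℝ)) = (1/2 : ℝ) • (z₁ - z₂) := by
    funext i
    have hxi := congrFun hx i
    have hyi := congrFun hy i
    simp only [Pi.add_apply, Pi.smul_apply, smul_eq_mul] at hxi hyi
    simp only [Pi.sub_apply, Int.cast_sub, Pi.smul_apply, smul_eq_mul, hxi, hyi]
    ring
  have hlow := one_le_norm_intCast_of_ne_zero hne
  have hbad := hBbad (x - y) hne
  rw [hdiff] at hlow hbad
  have hψ := hψanti _ _ hlow (norm_half_sub_le_of_mem_OmegaSet (by linarith) hz₁ hz₂)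
  nlinarith [infDist_half_sub_le_of_mem_OmegaSet hz₁ hz₂]

theorem half_omega_translate_at_most_one_integer_point
    (d : ℕ) (hd : 1 ≤ d) (R : ℝ) (hR : 1 ≤ R)
    (ψ : ℝ → ℝ)
    (hψpos : ∀ T, 1 ≤ T → 0 < ψ T)
    (hψanti : ∀ T₁ T₂, 1 ≤ T₁ → T₁ ≤ T₂ → ψ T₂ ≤ ψ T₁)
    (B : AffineSubspace ℝ (Fin d → ℝ)) (γ : ℝ) (hγ : 0 < γ)
    (hBbad : ∀ x : Fin (d+1) → ℤ, x ≠ 0 →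
      γ * ψ ‖(fun i => (x i : ℝ))‖ <
        Metric.infDist (fun i => (x i : ℝ)) (spanLift B : Set (Fin (d+1) → ℝ)))
    (T : ℝ) (hT : 1 ≤ T) (c : Fin (d+1) → ℝ) :
    ∀ x y : Fin (d+1) → ℤ,
      (∃ z ∈ OmegaSet B ψ R T γ, (fun i => (x i : ℝ)) = (1/2 : ℝ) • z + c) →
      (∃ z ∈ OmegaSet B ψ R T γ, (fun i => (y i : ℝ)) = (1/2 : ℝ) • z + c) →
      x = y :=
  half_omega_translate_at_most_one_integer_point_general d R hR ψ hψanti B γ hγ hBbad T c
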